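/- Two independent queries to the compressed oracle commute exactly: on ℂ^{X×Y×X'×Y'×D̄} with X' = X and Y' = Y being disjoint copies of the query registers, the unitary O_{XYD} acting on the first, second, and fifth registers commutes with the unitary O_{X'Y'D} acting on the third, fourth, and fifth registers; i.e., their commutator is the zero operator. -/

import Mathlib

open scoped Matrix Kronecker

noncomputable section

/-- The ℓ²→ℓ² operator norm of a square complex matrix. -/
def opNorm {I : Type*} [Fintype I] [DecidableEq I] (A : Matrix I I ℂ) : ℝ :=
  ‖Matrix.toEuclideanCLM (𝕜 := ℂ) A‖

/-- The commutator [A,B] = AB - BA. -/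
def commM {I : Type*} [Fintype I] (A B : Matrix I I ℂ) : Matrix I I ℂ := A * B - B * A

/-- Euclidean norm of a vector in ℂ^I. -/
def vnorm {I : Type*} [Fintype I] (v : I → ℂ) : ℝ := Real.sqrt (∑ i, ‖v i‖ ^ 2)

/-- Y = {0,1}^n. -/
abbrev Yb (n : ℕ) := Fin n → Bool
/-- Ȳ = Y ∪ {⊥}. -/
abbrev Ybar (n : ℕ) := Option (Yb n)

/-- standard basis vector |a⟩. -/
def ket {n : ℕ} (a : Ybar n) : Ybar n → ℂ := fun b => if b = a then 1 else 0

/-- (-1)^{η⋅y}. -/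
def signDot {n : ℕ} (η y : Yb n) : ℂ := (-1 : ℂ) ^ (Finset.univ.filter fun i => η i && y i).card

/-- 2^{-n/2}. -/
def cst (n : ℕ) : ℝ := (2 : ℝ) ^ (-(n : ℝ) / 2)

/-- |φ_η⟩ = 2^{-n/2} ∑_y (-1)^{η⋅y} |y⟩. -/
def phi {n : ℕ} (η : Yb n) : Ybar n → ℂ :=
  fun a => Option.casesOn a 0 fun y => (cst n : ℂ) * signDot η y

/-- |φ_0⟩. -/
def phi0 (n : ℕ) : Ybar n → ℂ := phi fun _ => false

/-- The Walsh–Hadamard transform on ℂ^Y, extended by the identity on |⊥⟩. -/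
def Hbar (n : ℕ) : Matrix (Ybar n) (Ybar n) ℂ :=
  Matrix.of fun a b =>
    match a, b with
    | none, none => 1
    | some y, some y' => (cst n : ℂ) * signDot y y'
    | _, _ => 0

/-- The involution exchanging ⊥ and 0^n. -/
def swapBot (n : ℕ) : Ybar n → Ybar n :=
  fun a =>
    Option.casesOn a (some fun _ => false) fun y =>
      if y = (fun _ => false) then none else some y

/-- The permutation matrix exchanging |⊥⟩ and |0^n⟩. -/
def Sswap (n : ℕ) : Matrix (Ybar n) (Ybar n) ℂ :=
  Matrix.of fun a b => if a = swapBot n b then 1 else 0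

/-- F = H̄ ⬝ S ⬝ H̄. -/
def Fmat (n : ℕ) : Matrix (Ybar n) (Ybar n) ℂ := Hbar n * Sswap n * Hbar n

/-- Γ_x = |{y : (x,y) ∈ R}|. -/
def Gam {n : ℕ} {X : Type*} [Fintype X] (R : X → Yb n → Prop) [∀ x, DecidablePred (R x)]
    (x : X) : ℕ :=
  (Finset.univ.filter fun y => R x y).card

/-- Γ_R = max_x Γ_x. -/
def GamR {n : ℕ} {X : Type*} [Fintype X] (R : X → Yb n → Prop) [∀ x, DecidablePred (R x)] : ℕ :=
  Finset.univ.sup fun x => Gam R x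

/-- whether an entry a ∈ Ȳ satisfies the relation at x (⊥ never does). -/
def hitB {n : ℕ} {X : Type*} (R : X → Yb n → Prop) [∀ x, DecidablePred (R x)] (x : X) :
    Ybar n → Bool :=
  fun a => Option.casesOn a false fun y => decide (R x y)

/-- The projection Π^x = ∑_{y : (x,y)∈R} |y⟩⟨y| on ℂ^Ȳ. -/
def Pix {n : ℕ} {X : Type*} (R : X → Yb n → Prop) [∀ x, DecidablePred (R x)] (x : X) :
    Matrix (Ybar n) (Ybar n) ℂ :=
  Matrix.diagonal fun a => if hitB R x a then 1 else 0

/-- bitwise xor. -/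
def xorY {n : ℕ} (y y' : Yb n) : Yb n := fun i => xor (y i) (y' i)

/-- CNOT on Y × Ȳ (control Ȳ, target Y), acting trivially on |y⟩⊗|⊥⟩. -/
def cnotFun (n : ℕ) : Yb n × Ybar n → Yb n × Ybar n :=
  fun p => Option.casesOn p.2 p fun y' => (xorY p.1 y', p.2)

def CNOTmat (n : ℕ) : Matrix (Yb n × Ybar n) (Yb n × Ybar n) ℂ :=
  Matrix.of fun a b => if a = cnotFun n b then 1 else 0

/-- O^x = (1⊗F)·CNOT·(1⊗F) on ℂ^{Y×Ȳ}. -/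
def Oxsmall (n : ℕ) : Matrix (Yb n × Ybar n) (Yb n × Ybar n) ℂ :=
  ((1 : Matrix (Yb n) (Yb n) ℂ) ⊗ₖ Fmat n) * CNOTmat n *
    ((1 : Matrix (Yb n) (Yb n) ℂ) ⊗ₖ Fmat n)

/-- The database index set D̄ = X → Ȳ. -/
abbrev Db (n : ℕ) (X : Type*) := X → Ybar n

/-- An operator A on ℂ^Ȳ acting on the x-coordinate of ℂ^{D̄}. -/
def onCoord {n : ℕ} {X : Type*} [Fintype X] [DecidableEq X] (x : X)
    (A : Matrix (Ybar n) (Ybar n) ℂ) : Matrix (Db n X) (Db n X) ℂ :=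
  Matrix.of fun d d' => if ∀ x', x' ≠ x → d x' = d' x' then A (d x) (d' x) else 0

/-- Π^x_{D_x} : diagonal projection on ℂ^{D̄} onto databases with (x, d x) ∈ R. -/
def PiDx {n : ℕ} {X : Type*} [Fintype X] [DecidableEq X]
    (R : X → Yb n → Prop) [∀ x, DecidablePred (R x)] (x : X) :
    Matrix (Db n X) (Db n X) ℂ :=
  Matrix.diagonal fun d => if hitB R x (d x) then 1 else 0

/-- Π^∅_D : diagonal projection on ℂ^{D̄} onto databases hitting R nowhere. -/
def PiEmptyD {n : ℕ} {X : Type*} [Fintype X] [DecidableEq X]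
    (R : X → Yb n → Prop) [∀ x, DecidablePred (R x)] :
    Matrix (Db n X) (Db n X) ℂ :=
  Matrix.diagonal fun d => if ∀ x, hitB R x (d x) = false then 1 else 0

/-- CNOT_{YD_x}. -/
def cnotDFun {n : ℕ} {X : Type*} (x : X) : Yb n × Db n X → Yb n × Db n X :=
  fun p => Option.casesOn (p.2 x) p fun yx => (xorY p.1 yx, p.2)

def CNOTD {n : ℕ} {X : Type*} [Fintype X] [DecidableEq X] (x : X) :
    Matrix (Yb n × Db n X) (Yb n × Db n X) ℂ :=
  Matrix.of fun a b => if a = cnotDFun x b then 1 else 0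

/-- F_{D_x}. -/
def FDx (n : ℕ) {X : Type*} [Fintype X] [DecidableEq X] (x : X) :
    Matrix (Db n X) (Db n X) ℂ :=
  onCoord x (Fmat n)

/-- O^x_{YD_x} = F_{D_x}·CNOT_{YD_x}·F_{D_x} on ℂ^{Y×D̄}. -/
def OxD (n : ℕ) {X : Type*} [Fintype X] [DecidableEq X] (x : X) :
    Matrix (Yb n × Db n X) (Yb n × Db n X) ℂ :=
  ((1 : Matrix (Yb n) (Yb n) ℂ) ⊗ₖ FDx n x) * CNOTD x *
    ((1 : Matrix (Yb n) (Yb n) ℂ) ⊗ₖ FDx n x)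

/-- O_{XYD} = ∑_x |x⟩⟨x| ⊗ O^x_{YD_x} on ℂ^{X×Y×D̄}. -/
def OXYD (n : ℕ) (X : Type*) [Fintype X] [DecidableEq X] :
    Matrix (X × Yb n × Db n X) (X × Yb n × Db n X) ℂ :=
  Matrix.of fun p q =>
    if p.1 = q.1 then OxD n p.1 (p.2.1, p.2.2) (q.2.1, q.2.2) else 0

/-- The pointer set P = ZMod (|X|+1). -/
abbrev Ptr (X : Type*) [Fintype X] := ZMod (Fintype.card X + 1)

/-- Encoding of X into the nonzero elements of ZMod (|X|+1). -/
def encodeX {X : Type*} [Fintype X] (x : X) : Ptr X :=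
  (((Fintype.equivFin X x : ℕ) + 1 : ℕ) : Ptr X)

/-- ext(d): the smallest x ∈ X with (x, d x) ∈ R, encoded in ZMod (|X|+1); ∅ ↦ 0. -/
def extD {n : ℕ} {X : Type*} [Fintype X] [LinearOrder X] (R : X → Yb n → Prop)
    [∀ x, DecidablePred (R x)] (d : Db n X) : Ptr X :=
  if h : (Finset.univ.filter fun x => hitB R x (d x) = true).Nonempty then
    encodeX ((Finset.univ.filter fun x => hitB R x (d x) = true).min' h)
  else 0

/-- The purified measurement M_{DP} : |d⟩⊗|w⟩ ↦ |d⟩⊗|w + ext(d)⟩ on ℂ^{D̄×P}. -/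
def MDP {n : ℕ} {X : Type*} [Fintype X] [LinearOrder X] (R : X → Yb n → Prop)
    [∀ x, DecidablePred (R x)] :
    Matrix (Db n X × Ptr X) (Db n X × Ptr X) ℂ :=
  Matrix.of fun p q => if p = (q.1, q.2 + extD R q.1) then 1 else 0

/-- O^x_{YD_x} ⊗ 1_P on ℂ^{Y×D̄×P}. -/
def OxDP (n : ℕ) {X : Type*} [Fintype X] [DecidableEq X] (x : X) :
    Matrix (Yb n × Db n X × Ptr X) (Yb n × Db n X × Ptr X) ℂ :=
  Matrix.of fun p q =>
    if p.2.2 = q.2.2 then OxD n x (p.1, p.2.1) (q.1, q.2.1) else 0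

/-- 1_Y ⊗ M_{DP} on ℂ^{Y×D̄×P}. -/
def MYDP {n : ℕ} {X : Type*} [Fintype X] [LinearOrder X] (R : X → Yb n → Prop)
    [∀ x, DecidablePred (R x)] :
    Matrix (Yb n × Db n X × Ptr X) (Yb n × Db n X × Ptr X) ℂ :=
  Matrix.of fun p q =>
    if p.1 = q.1 then MDP R (p.2.1, p.2.2) (q.2.1, q.2.2) else 0

/-- O_{XYD} ⊗ 1_P on ℂ^{X×Y×D̄×P}. -/
def OXYDP (n : ℕ) (X : Type*) [Fintype X] [DecidableEq X] :
    Matrix (X × Yb n × Db n X × Ptr X) (X × Yb n × Db n X × Ptr X) ℂ :=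
  Matrix.of fun p q =>
    if p.2.2.2 = q.2.2.2 then
      OXYD n X (p.1, p.2.1, p.2.2.1) (q.1, q.2.1, q.2.2.1)
    else 0

/-- 1_{X×Y} ⊗ M_{DP} on ℂ^{X×Y×D̄×P}. -/
def MXYDP {n : ℕ} {X : Type*} [Fintype X] [LinearOrder X] (R : X → Yb n → Prop)
    [∀ x, DecidablePred (R x)] :
    Matrix (X × Yb n × Db n X × Ptr X) (X × Yb n × Db n X × Ptr X) ℂ :=
  Matrix.of fun p q =>
    if p.1 = q.1 ∧ p.2.1 = q.2.1 then
      MDP R (p.2.2.1, p.2.2.2) (q.2.2.1, q.2.2.2)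
    else 0








-- helper instance (Lean struggles to find this by search)
instance instDEq4 (n : ℕ) (X : Type*) [Fintype X] [DecidableEq X] :
    DecidableEq (X × Yb n × Db n X × Ptr X) :=
  instDecidableEqProd


-- extensions to the five-register space W × X × Y × D̄ × P
/-- 1_W ⊗ O_{XYD} ⊗ 1_P on ℂ^{W×X×Y×D̄×P}. -/
def OW (n : ℕ) (W X : Type*) [Fintype X] [DecidableEq X] [DecidableEq W] :
    Matrix (W × X × Yb n × Db n X × Ptr X) (W × X × Yb n × Db n X × Ptr X) ℂ :=
  Matrix.of fun p q =>
    if p.1 = q.1 ∧ p.2.2.2.2 = q.2.2.2.2 then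
      OXYD n X (p.2.1, p.2.2.1, p.2.2.2.1) (q.2.1, q.2.2.1, q.2.2.2.1)
    else 0

/-- 1_{W×X×Y} ⊗ M_{DP} on ℂ^{W×X×Y×D̄×P}. -/
def MW {n : ℕ} (W : Type*) {X : Type*} [Fintype X] [LinearOrder X] [DecidableEq W]
    (R : X → Yb n → Prop) [∀ x, DecidablePred (R x)] :
    Matrix (W × X × Yb n × Db n X × Ptr X) (W × X × Yb n × Db n X × Ptr X) ℂ :=
  Matrix.of fun p q =>
    if p.1 = q.1 ∧ p.2.1 = q.2.1 ∧ p.2.2.1 = q.2.2.1 then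
      MDP R (p.2.2.2.1, p.2.2.2.2) (q.2.2.2.1, q.2.2.2.2)
    else 0

instance instDEq5 (n : ℕ) (W X : Type*) [Fintype X] [DecidableEq X] [DecidableEq W] :
    DecidableEq (W × X × Yb n × Db n X × Ptr X) :=
  instDecidableEqProd


/-- V ⊗ 1_{D̄×P} on ℂ^{W×X×Y×D̄×P}. -/
def Vext (n : ℕ) (W X : Type*) [Fintype X] [DecidableEq X]
    (V : Matrix (W × X × Yb n) (W × X × Yb n) ℂ) :
    Matrix (W × X × Yb n × Db n X × Ptr X) (W × X × Yb n × Db n X × Ptr X) ℂ :=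
  Matrix.of fun p q =>
    if p.2.2.2 = q.2.2.2 then V (p.1, p.2.1, p.2.2.1) (q.1, q.2.1, q.2.2.1) else 0

/-- Ψ = ψ ⊗ |⊥⃗⟩ ⊗ |0⟩. -/
def PsiInit (n : ℕ) {W X : Type*} [Fintype X] [DecidableEq X]
    (ψ : W × X × Yb n → ℂ) : W × X × Yb n × Db n X × Ptr X → ℂ :=
  fun p =>
    if p.2.2.2.1 = (fun _ => (none : Ybar n)) ∧ p.2.2.2.2 = (0 : Ptr X) then
      ψ (p.1, p.2.1, p.2.2.1)
    else 0

/-- 1_{W×X×Y×D̄} ⊗ |0⟩⟨0|_P. -/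
def ProjZeroP (n : ℕ) (W X : Type*) [Fintype X] [DecidableEq X] [DecidableEq W] :
    Matrix (W × X × Yb n × Db n X × Ptr X) (W × X × Yb n × Db n X × Ptr X) ℂ :=
  Matrix.of fun p q =>
    if p.1 = q.1 ∧ p.2.1 = q.2.1 ∧ p.2.2.1 = q.2.2.1 ∧ p.2.2.2.1 = q.2.2.2.1 ∧
        p.2.2.2.2 = (0 : Ptr X) ∧ q.2.2.2.2 = (0 : Ptr X) then 1 else 0



/-- O_{XYD} acting on registers 1, 2 and 5 of ℂ^{X×Y×X'×Y'×D̄}. -/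
def Oquery1 (n : ℕ) (X : Type*) [Fintype X] [DecidableEq X] :
    Matrix (X × Yb n × X × Yb n × Db n X) (X × Yb n × X × Yb n × Db n X) ℂ :=
  Matrix.of fun p q =>
    if p.2.2.1 = q.2.2.1 ∧ p.2.2.2.1 = q.2.2.2.1 then
      OXYD n X (p.1, p.2.1, p.2.2.2.2) (q.1, q.2.1, q.2.2.2.2)
    else 0

/-- O_{X'Y'D} acting on registers 3, 4 and 5 of ℂ^{X×Y×X'×Y'×D̄}. -/
def Oquery2 (n : ℕ) (X : Type*) [Fintype X] [DecidableEq X] :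
    Matrix (X × Yb n × X × Yb n × Db n X) (X × Yb n × X × Yb n × Db n X) ℂ :=
  Matrix.of fun p q =>
    if p.1 = q.1 ∧ p.2.1 = q.2.1 then
      OXYD n X (p.2.2.1, p.2.2.2.1, p.2.2.2.2) (q.2.2.1, q.2.2.2.1, q.2.2.2.2)
    else 0


/-- M^R_{DP} acting on registers D and P of ℂ^{D̄×P×P'}. -/
def Mext1 {n : ℕ} {X : Type*} [Fintype X] [LinearOrder X]
    (R : X → Yb n → Prop) [∀ x, DecidablePred (R x)] :
    Matrix (Db n X × Ptr X × Ptr X) (Db n X × Ptr X × Ptr X) ℂ :=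
  Matrix.of fun p q =>
    if p.2.2 = q.2.2 then MDP R (p.1, p.2.1) (q.1, q.2.1) else 0

/-- M^{R'}_{DP'} acting on registers D and P' of ℂ^{D̄×P×P'}. -/
def Mext2 {n : ℕ} {X : Type*} [Fintype X] [LinearOrder X]
    (R' : X → Yb n → Prop) [∀ x, DecidablePred (R' x)] :
    Matrix (Db n X × Ptr X × Ptr X) (Db n X × Ptr X × Ptr X) ℂ :=
  Matrix.of fun p q =>
    if p.2.1 = q.2.1 then MDP R' (p.1, p.2.2) (q.1, q.2.2) else 0



/-!
Both queries are block diagonal in the pair of query indices `(x, x')`; the blocks act on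
`Y × Y' × D̄` as `O^x` on `(Y, D_x)` and `O^{x'}` on `(Y', D_{x'})`. For `x ≠ x'` they act on
different query registers and different coordinates of the database, hence commute. For `x = x'`
both are `F_{D_x} · CNOT · F_{D_x}` with the same `F`, so `F² = 1` turns their product into
`F_{D_x} · CNOT_{Y D_x} · CNOT_{Y' D_x} · F_{D_x}`, and the two CNOTs commute since they share
the control `D_x` and have different targets.
-/

theorem Commute.conj_of_mul_self_eq_one {M : Type*} [Monoid M] {k p q : M} (hk : k * k = 1)
    (h : Commute p q) : Commute (k * p * k) (k * q * k) := by
  calc k * p * k * (k * q * k) = k * p * (k * k) * q * k := by simp only [mul_assoc]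
    _ = k * q * (k * k) * p * k := by rw [hk, mul_one, mul_one, mul_assoc k, h.eq, ← mul_assoc]
    _ = k * q * k * (k * p * k) := by simp only [mul_assoc]

section Registers

variable {R : Type*} [CommSemiring R] {α α' γ : Type*}

def liftFst [DecidableEq α'] (A : Matrix (α × γ) (α × γ) R) :
    Matrix (α × α' × γ) (α × α' × γ) R :=
  Matrix.of fun p q => if p.2.1 = q.2.1 then A (p.1, p.2.2) (q.1, q.2.2) else 0

def liftSnd [DecidableEq α] (B : Matrix (α' × γ) (α' × γ) R) :
    Matrix (α × α' × γ) (α × α' × γ) R :=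
  Matrix.of fun p q => if p.1 = q.1 then B (p.2.1, p.2.2) (q.2.1, q.2.2) else 0

theorem liftFst_mul [Fintype α] [Fintype α'] [Fintype γ] [DecidableEq α']
    (A B : Matrix (α × γ) (α × γ) R) :
    liftFst (α' := α') (A * B) = liftFst A * liftFst B := by
  ext ⟨a, a', c⟩ ⟨b, b', c'⟩
  simp only [liftFst, Matrix.of_apply, Matrix.mul_apply, Fintype.sum_prod_type, ite_mul,
    zero_mul]
  simp [Finset.sum_ite_eq, Finset.sum_comm (γ := α)]

theorem liftSnd_mul [Fintype α] [Fintype α'] [Fintype γ] [DecidableEq α]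
    (A B : Matrix (α' × γ) (α' × γ) R) :
    liftSnd (α := α) (A * B) = liftSnd A * liftSnd B := by
  ext ⟨a, a', c⟩ ⟨b, b', c'⟩
  simp only [liftSnd, Matrix.of_apply, Matrix.mul_apply, Fintype.sum_prod_type, ite_mul,
    zero_mul]
  simp [Finset.sum_ite_eq]

theorem liftSnd_one [DecidableEq α] [DecidableEq α'] [DecidableEq γ] :
    liftSnd (α := α) (1 : Matrix (α' × γ) (α' × γ) R) = 1 := by
  ext ⟨a, a', c⟩ ⟨b, b', c'⟩
  simp only [liftSnd, Matrix.of_apply, Matrix.one_apply, Prod.mk.injEq]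
  split_ifs <;> simp_all

theorem liftFst_one_kronecker [DecidableEq α] [DecidableEq α'] (F : Matrix γ γ R) :
    liftFst (α' := α') ((1 : Matrix α α R) ⊗ₖ F) = liftSnd ((1 : Matrix α' α' R) ⊗ₖ F) := by
  ext ⟨a, a', c⟩ ⟨b, b', c'⟩
  simp only [liftFst, liftSnd, Matrix.of_apply, Matrix.kroneckerMap_apply, Matrix.one_apply]
  split_ifs <;> simp

variable [Fintype α] [Fintype α'] [Fintype γ] [DecidableEq α] [DecidableEq α']

theorem liftFst_mul_liftSnd_apply (A : Matrix (α × γ) (α × γ) R)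
    (B : Matrix (α' × γ) (α' × γ) R) (a b : α) (a' b' : α') (c c' : γ) :
    (liftFst A * liftSnd B : Matrix (α × α' × γ) (α × α' × γ) R) (a, a', c) (b, b', c') =
      ∑ g, A (a, c) (b, g) * B (a', g) (b', c') := by
  simp only [Matrix.mul_apply, liftFst, liftSnd, Matrix.of_apply, Fintype.sum_prod_type, ite_mul,
    mul_ite, zero_mul, mul_zero]
  simp [Finset.sum_ite_eq, Finset.sum_ite_eq']

theorem liftSnd_mul_liftFst_apply (A : Matrix (α × γ) (α × γ) R)
    (B : Matrix (α' × γ) (α' × γ) R) (a b : α) (a' b' : α') (c c' : γ) :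
    (liftSnd B * liftFst A : Matrix (α × α' × γ) (α × α' × γ) R) (a, a', c) (b, b', c') =
      ∑ g, B (a', c) (b', g) * A (a, g) (b, c') := by
  simp only [Matrix.mul_apply, liftFst, liftSnd, Matrix.of_apply, Fintype.sum_prod_type, ite_mul,
    mul_ite, zero_mul, mul_zero]
  simp [Finset.sum_ite_eq, Finset.sum_ite_eq']

theorem commute_liftFst_liftSnd_iff (A : Matrix (α × γ) (α × γ) R)
    (B : Matrix (α' × γ) (α' × γ) R) :
    Commute (liftFst A : Matrix (α × α' × γ) (α × α' × γ) R) (liftSnd B) ↔ ∀ a b a' b' c c',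
      ∑ g, A (a, c) (b, g) * B (a', g) (b', c') = ∑ g, B (a', c) (b', g) * A (a, g) (b, c') := by
  refine ⟨fun h a b a' b' c c' => ?_, fun h => ?_⟩
  · rw [← liftFst_mul_liftSnd_apply, ← liftSnd_mul_liftFst_apply, h.eq]
  · ext ⟨a, a', c⟩ ⟨b, b', c'⟩
    rw [liftFst_mul_liftSnd_apply, liftSnd_mul_liftFst_apply, h]

end Registers

section Controlled

variable {R : Type*} [CommSemiring R] {α α' γ : Type*}
  [Fintype α] [Fintype α'] [Fintype γ] [DecidableEq α] [DecidableEq α']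

/-- `M` is block diagonal with respect to the last register, which thus acts as a control. -/
def IsControlled (M : Matrix (α × γ) (α × γ) R) : Prop :=
  ∀ a b u w, u ≠ w → M (a, u) (b, w) = 0

theorem commute_liftFst_liftSnd_of_isControlled {A : Matrix (α × γ) (α × γ) R}
    {B : Matrix (α' × γ) (α' × γ) R} (hA : IsControlled A) (hB : IsControlled B) :
    Commute (liftFst A : Matrix (α × α' × γ) (α × α' × γ) R) (liftSnd B) := by
  rw [commute_liftFst_liftSnd_iff]
  intro a b a' b' c c'
  rw [Finset.sum_eq_single c (fun g _ hg => by rw [hA a b c g hg.symm, zero_mul]) (by simp),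
    Finset.sum_eq_single c (fun g _ hg => by rw [hB a' b' c g hg.symm, zero_mul]) (by simp)]
  rcases eq_or_ne c c' with rfl | hc
  · exact mul_comm _ _
  · rw [hA a b c c' hc, hB a' b' c c' hc, mul_zero, mul_zero]

theorem commute_liftFst_liftSnd_conj [DecidableEq γ] {F : Matrix γ γ R} (hF : F * F = 1)
    {C : Matrix (α × γ) (α × γ) R} {C' : Matrix (α' × γ) (α' × γ) R}
    (hC : IsControlled C) (hC' : IsControlled C') :
    Commute (liftFst ((1 ⊗ₖ F) * C * (1 ⊗ₖ F)) : Matrix (α × α' × γ) (α × α' × γ) R)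
      (liftSnd ((1 ⊗ₖ F) * C' * (1 ⊗ₖ F))) := by
  rw [liftFst_mul, liftFst_mul, liftSnd_mul, liftSnd_mul, liftFst_one_kronecker]
  refine Commute.conj_of_mul_self_eq_one ?_ (commute_liftFst_liftSnd_of_isControlled hC hC')
  rw [← liftSnd_mul, ← Matrix.mul_kronecker_mul, hF, Matrix.one_mul, Matrix.one_kronecker_one,
    liftSnd_one]

end Controlled

theorem funext_iff_ne_and_apply {X β : Type*} (x : X) {d e : X → β} :
    d = e ↔ (∀ z, z ≠ x → d z = e z) ∧ d x = e x := by
  refine ⟨fun h => h ▸ ⟨fun _ _ => rfl, rfl⟩, fun ⟨hne, hx⟩ => funext fun z => ?_⟩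
  by_cases hz : z = x
  · exact hz ▸ hx
  · exact hne z hz

section Coordinates

variable {R : Type*} [CommSemiring R] {X α α' β : Type*} [Fintype X] [DecidableEq X]
  [Fintype β] [DecidableEq β]

def atCoord (x : X) (M : Matrix (α × β) (α × β) R) :
    Matrix (α × (X → β)) (α × (X → β)) R :=
  Matrix.of fun p q => if ∀ z, z ≠ x → p.2 z = q.2 z then M (p.1, p.2 x) (q.1, q.2 x) else 0

/-- The intermediate databases `g` that contribute are the `Function.update c x v`. -/
theorem sum_atCoord_mul_atCoord (x : X) (M : Matrix (α × β) (α × β) R)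
    (N : Matrix (α' × β) (α' × β) R) (a b : α) (a' b' : α') (c c' : X → β) :
    ∑ g, atCoord x M (a, c) (b, g) * atCoord x N (a', g) (b', c') =
      if ∀ z, z ≠ x → c z = c' z then ∑ v, M (a, c x) (b, v) * N (a', v) (b', c' x) else 0 := by
  split_ifs with h
  · have hupd : ∀ v z, z ≠ x → c z = Function.update c x v z := fun v z hz =>
      (Function.update_of_ne hz v c).symm
    rw [← Finset.sum_subset (Finset.subset_univ (Finset.univ.image (Function.update c x))),
      Finset.sum_image fun v _ w _ hvw => Function.update_injective c x hvw]
    · refine Finset.sum_congr rfl fun v _ => ?_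
      simp only [atCoord, Matrix.of_apply, Function.update_self, if_pos (hupd v)]
      rw [if_pos fun z hz => (hupd v z hz).symm.trans (h z hz)]
    · intro g _ hg
      have hcg : ¬ ∀ z, z ≠ x → c z = g z := fun hcg =>
        hg (Finset.mem_image.2 ⟨g x, Finset.mem_univ _, funext fun z => by
          by_cases hz : z = x
          · subst hz; exact Function.update_self ..
          · rw [Function.update_of_ne hz, hcg z hz]⟩)
      simp only [atCoord, Matrix.of_apply, if_neg hcg, zero_mul]
  · refine Finset.sum_eq_zero fun g _ => ?_
    simp only [atCoord, Matrix.of_apply]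
    split_ifs with h1 h2
    · exact absurd (fun z hz => (h1 z hz).trans (h2 z hz)) h
    all_goals simp

/-- For `x ≠ x'` the only contributing intermediate database is `Function.update c x (c' x)`. -/
theorem sum_atCoord_mul_atCoord_of_ne {x x' : X} (hne : x ≠ x') (M : Matrix (α × β) (α × β) R)
    (N : Matrix (α' × β) (α' × β) R) (a b : α) (a' b' : α') (c c' : X → β) :
    ∑ g, atCoord x M (a, c) (b, g) * atCoord x' N (a', g) (b', c') =
      if ∀ z, z ≠ x → z ≠ x' → c z = c' z then
        M (a, c x) (b, c' x) * N (a', c x') (b', c' x')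
      else 0 := by
  split_ifs with h
  · set g₀ := Function.update c x (c' x)
    have hcg₀ : ∀ z, z ≠ x → c z = g₀ z := fun z hz => (Function.update_of_ne hz _ c).symm
    have hg₀c' : ∀ z, z ≠ x' → g₀ z = c' z := fun z hz => by
      by_cases hzx : z = x
      · subst hzx; exact Function.update_self ..
      · rw [← hcg₀ z hzx]; exact h z hzx hz
    rw [Finset.sum_eq_single g₀ _ (by simp)]
    · simp only [atCoord, Matrix.of_apply, if_pos hcg₀, if_pos hg₀c', g₀, Function.update_self,
        Function.update_of_ne hne.symm]
    · intro g _ hg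
      simp only [atCoord, Matrix.of_apply]
      split_ifs with h1 h2
      · refine absurd (funext fun z => ?_) hg
        by_cases hzx : z = x
        · subst hzx; rw [h2 z hne, hg₀c' z hne]
        · rw [← h1 z hzx, hcg₀ z hzx]
      all_goals simp
  · refine Finset.sum_eq_zero fun g _ => ?_
    simp only [atCoord, Matrix.of_apply]
    split_ifs with h1 h2
    · exact absurd (fun z hz hz' => (h1 z hz).trans (h2 z hz')) h
    all_goals simp

theorem atCoord_mul [Fintype α] (x : X) (M N : Matrix (α × β) (α × β) R) :
    atCoord x (M * N) = atCoord x M * atCoord x N := by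
  ext ⟨a, c⟩ ⟨b, c'⟩
  rw [Matrix.mul_apply, Fintype.sum_prod_type]
  simp only [sum_atCoord_mul_atCoord]
  simp only [atCoord, Matrix.of_apply, Matrix.mul_apply, Fintype.sum_prod_type]
  split_ifs <;> simp

variable [Fintype α] [Fintype α'] [DecidableEq α] [DecidableEq α']

theorem commute_liftFst_atCoord_liftSnd_atCoord (x : X) {M : Matrix (α × β) (α × β) R}
    {N : Matrix (α' × β) (α' × β) R}
    (h : Commute (liftFst M : Matrix (α × α' × β) (α × α' × β) R) (liftSnd N)) :
    Commute (liftFst (atCoord x M) : Matrix (α × α' × (X → β)) (α × α' × (X → β)) R)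
      (liftSnd (atCoord x N)) := by
  rw [commute_liftFst_liftSnd_iff] at h ⊢
  intro a b a' b' c c'
  rw [sum_atCoord_mul_atCoord, sum_atCoord_mul_atCoord, h]

theorem commute_liftFst_atCoord_liftSnd_atCoord_of_ne {x x' : X} (hne : x ≠ x')
    (M : Matrix (α × β) (α × β) R) (N : Matrix (α' × β) (α' × β) R) :
    Commute (liftFst (atCoord x M) : Matrix (α × α' × (X → β)) (α × α' × (X → β)) R)
      (liftSnd (atCoord x' N)) := by
  rw [commute_liftFst_liftSnd_iff]
  intro a b a' b' c c'
  rw [sum_atCoord_mul_atCoord_of_ne hne, sum_atCoord_mul_atCoord_of_ne hne.symm, mul_comm]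
  simp only [ne_eq, forall_comm (α := ¬_ = x)]

end Coordinates

theorem signDot_eq_prod {n : ℕ} (η y : Yb n) :
    signDot η y = ∏ i, if η i && y i then (-1 : ℂ) else 1 := by
  rw [signDot, Finset.prod_ite, Finset.prod_const, Finset.prod_const, one_pow, mul_one]

theorem sum_signDot_mul_signDot {n : ℕ} (y y' : Yb n) :
    ∑ z, signDot y z * signDot z y' = if y = y' then (2 : ℂ) ^ n else 0 := by
  have hcoord : ∀ i, ∑ b : Bool, (if y i && b then (-1 : ℂ) else 1) *
      (if b && y' i then (-1 : ℂ) else 1) = if y i = y' i then 2 else 0 := by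
    intro i
    cases y i <;> cases y' i <;> norm_num
  simp only [signDot_eq_prod, ← Finset.prod_mul_distrib]
  rw [← Fintype.prod_sum (fun i b => (if y i && b then (-1 : ℂ) else 1) *
    (if b && y' i then (-1 : ℂ) else 1))]
  simp only [hcoord]
  split_ifs with h
  · simp [h]
  · obtain ⟨i, hi⟩ := Function.ne_iff.1 h
    exact Finset.prod_eq_zero (Finset.mem_univ i) (if_neg hi)

theorem cst_mul_cst_mul_two_pow (n : ℕ) : (cst n : ℂ) * cst n * 2 ^ n = 1 := by
  have h : cst n * cst n * (2 : ℝ) ^ n = 1 := by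
    rw [cst, ← Real.rpow_natCast 2 n, ← Real.rpow_add two_pos, ← Real.rpow_add two_pos]
    norm_num
  exact_mod_cast h

theorem Hbar_mul_self (n : ℕ) : Hbar n * Hbar n = 1 := by
  ext a b
  rw [Matrix.mul_apply, Fintype.sum_option]
  match a, b with
  | none, none => simp [Hbar]
  | none, some y' => simp [Hbar]
  | some y, none => simp [Hbar]
  | some y, some y' =>
    have hsum : ∑ z, (cst n : ℂ) * signDot y z * ((cst n : ℂ) * signDot z y') =
        (cst n : ℂ) * cst n * ∑ z, signDot y z * signDot z y' := by
      rw [Finset.mul_sum]; exact Finset.sum_congr rfl fun z _ => by ring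
    simp only [Hbar, Matrix.of_apply, Matrix.one_apply, Option.some_inj, zero_mul, zero_add,
      hsum, sum_signDot_mul_signDot]
    split_ifs
    · exact cst_mul_cst_mul_two_pow n
    · exact mul_zero _

theorem swapBot_swapBot {n : ℕ} (a : Ybar n) : swapBot n (swapBot n a) = a := by
  rcases a with _ | y
  · simp [swapBot]
  · by_cases h : y = fun _ => false <;> simp [swapBot, h]

theorem Sswap_mul_self (n : ℕ) : Sswap n * Sswap n = 1 := by
  ext a c
  rw [Matrix.mul_apply, Finset.sum_eq_single (swapBot n c) (fun b _ hb => by simp [Sswap, hb])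
    (by simp)]
  simp [Sswap, Matrix.one_apply, swapBot_swapBot]

theorem Fmat_mul_self (n : ℕ) : Fmat n * Fmat n = 1 := by
  calc Fmat n * Fmat n = Hbar n * (Sswap n * (Hbar n * Hbar n) * Sswap n) * Hbar n := by
        simp only [Fmat, mul_assoc]
    _ = 1 := by rw [Hbar_mul_self, mul_one, Sswap_mul_self, mul_one, Hbar_mul_self]

theorem isControlled_CNOTmat (n : ℕ) : IsControlled (CNOTmat n) := by
  rintro a b u w huw
  rcases w with _ | y <;>
    simp [CNOTmat, cnotFun, huw]

theorem cnotFun_snd {n : ℕ} (p : Yb n × Ybar n) : (cnotFun n p).2 = p.2 := by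
  obtain ⟨b, _ | y⟩ := p <;> rfl

theorem cnotDFun_eq {n : ℕ} {X : Type*} (x : X) (b : Yb n) (e : Db n X) :
    cnotDFun x (b, e) = ((cnotFun n (b, e x)).1, e) := by
  unfold cnotDFun cnotFun
  dsimp only
  cases e x <;> rfl

def queryRegistersEquiv (A B C : Type*) : A × B × A × B × C ≃ (B × B × C) × (A × A) where
  toFun p := ((p.2.1, p.2.2.2.1, p.2.2.2.2), (p.1, p.2.2.1))
  invFun q := (q.2.1, q.1.1, q.2.2, q.1.2.1, q.1.2.2)
  left_inv _ := rfl
  right_inv _ := rfl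

section Oracle

variable {n : ℕ} {X : Type*} [Fintype X] [DecidableEq X]

theorem CNOTD_eq_atCoord (x : X) : CNOTD (n := n) x = atCoord x (CNOTmat n) := by
  ext ⟨a, d⟩ ⟨b, e⟩
  have hcnot : (a, d x) = cnotFun n (b, e x) ↔ a = (cnotFun n (b, e x)).1 ∧ d x = e x := by
    rw [Prod.ext_iff, cnotFun_snd]
  simp only [CNOTD, atCoord, CNOTmat, Matrix.of_apply, cnotDFun_eq, Prod.mk.injEq, hcnot,
    funext_iff_ne_and_apply x (d := d)]
  split_ifs <;> first | rfl | tauto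

theorem one_kronecker_FDx_eq_atCoord (x : X) :
    (1 : Matrix (Yb n) (Yb n) ℂ) ⊗ₖ FDx n x = atCoord x (1 ⊗ₖ Fmat n) := by
  ext ⟨a, d⟩ ⟨b, e⟩
  simp only [FDx, onCoord, atCoord, Matrix.of_apply, Matrix.kroneckerMap_apply]
  split_ifs <;> simp

theorem OxD_eq_atCoord (x : X) : OxD n x = atCoord x (Oxsmall n) := by
  rw [OxD, one_kronecker_FDx_eq_atCoord, CNOTD_eq_atCoord, Oxsmall, atCoord_mul, atCoord_mul]

theorem commute_liftFst_OxD_liftSnd_OxD (x x' : X) :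
    Commute (liftFst (OxD n x) : Matrix (Yb n × Yb n × Db n X) (Yb n × Yb n × Db n X) ℂ)
      (liftSnd (OxD n x')) := by
  rw [OxD_eq_atCoord, OxD_eq_atCoord]
  rcases eq_or_ne x x' with rfl | hne
  · exact commute_liftFst_atCoord_liftSnd_atCoord x
      (commute_liftFst_liftSnd_conj (Fmat_mul_self n) (isControlled_CNOTmat n)
        (isControlled_CNOTmat n))
  · exact commute_liftFst_atCoord_liftSnd_atCoord_of_ne hne _ _

theorem Oquery1_eq_reindex :
    Oquery1 n X = Matrix.reindex (queryRegistersEquiv X (Yb n) (Db n X)).symm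
      (queryRegistersEquiv X (Yb n) (Db n X)).symm
      (Matrix.blockDiagonal fun k : X × X => liftFst (OxD n k.1)) := by
  ext ⟨x₁, y₁, x₂, y₂, d⟩ ⟨x₁', y₁', x₂', y₂', e⟩
  simp only [Oquery1, OXYD, Matrix.reindex_apply, Matrix.submatrix_apply, Equiv.symm_symm,
    Matrix.blockDiagonal_apply, liftFst, queryRegistersEquiv, Matrix.of_apply, Equiv.coe_fn_mk,
    Prod.mk.injEq]
  split_ifs <;> first | rfl | tauto

theorem Oquery2_eq_reindex :
    Oquery2 n X = Matrix.reindex (queryRegistersEquiv X (Yb n) (Db n X)).symm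
      (queryRegistersEquiv X (Yb n) (Db n X)).symm
      (Matrix.blockDiagonal fun k : X × X => liftSnd (OxD n k.2)) := by
  ext ⟨x₁, y₁, x₂, y₂, d⟩ ⟨x₁', y₁', x₂', y₂', e⟩
  simp only [Oquery2, OXYD, Matrix.reindex_apply, Matrix.submatrix_apply, Equiv.symm_symm,
    Matrix.blockDiagonal_apply, liftSnd, queryRegistersEquiv, Matrix.of_apply, Equiv.coe_fn_mk,
    Prod.mk.injEq]
  split_ifs <;> first | rfl | tauto

end Oracle

theorem stmt15_general (n : ℕ) (X : Type*) [Fintype X] [DecidableEq X] :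
    commM (Oquery1 n X) (Oquery2 n X) = 0 := by
  have hblocks : Commute (Matrix.blockDiagonal fun k : X × X => liftFst (OxD n k.1))
      (Matrix.blockDiagonal fun k : X × X => liftSnd (OxD n k.2)) :=
    (Pi.commute_iff.2 fun k : X × X => commute_liftFst_OxD_liftSnd_OxD (n := n) k.1 k.2).map
      (Matrix.blockDiagonalRingHom (Yb n × Yb n × Db n X) (X × X) ℂ)
  rw [commM, sub_eq_zero, Oquery1_eq_reindex, Oquery2_eq_reindex]
  exact (hblocks.map (Matrix.reindexRingEquiv ℂ (queryRegistersEquiv X (Yb n) (Db n X)).symm)).eq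

theorem stmt15 (n : ℕ) (X : Type*) [Fintype X] [DecidableEq X] [Nonempty X] :
    commM (Oquery1 n X) (Oquery2 n X) = 0 :=
  stmt15_general n X

end
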